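/- arXiv:1908.03432 — 2 statements merged into one kernel-verified Lean document; each statement's English description precedes it below -/
import Mathlib

section
/- Let g: [0,δ] → ℝ be continuous with g(0) > 0, let d ≥ 1, n ≥ 2 be integers, c > 0, and E(R) = c·Rⁿ·(1 + η(R)) with η continuous, η(0)=0. Then lim_{T→∞} T^{d/n} ∫₀^δ R^{d−1} g(R) e^{−T·E(R)} dR = g(0)·c^{−d/n}·(1/n)·Γ(d/n). -/
/-!
With `t = T^(1/n)` and `R = x / t`, the factor `T^(d/n) = t^d` exactly absorbs the Jacobian and
`R^(d-1)`, and `T E(R) = c xⁿ (1 + η(x/t))`, so the rescaled quantity is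
`∫₀^{tδ} x^(d-1) g(x/t) exp(-c xⁿ (1 + η(x/t))) dx`. Its integrand tends to
`g(0) x^(d-1) exp(-c xⁿ)` and is dominated by `M x^(d-1) exp(-c ε xⁿ)`, where `M` bounds `|g|`
and `ε > 0` is the minimum of `1 + η` on `[0, δ]` (positive wherever `E` is). Dominated
convergence and `∫₀^∞ x^(d-1) exp(-c xⁿ) dx = c^(-d/n) Γ(d/n) / n` finish the proof.
-/

open Filter Topology

open Set MeasureTheory

theorem intervalIntegral.pow_succ_mul_integral_pow_mul_comp_mul (F : ℝ → ℝ → ℝ) {t : ℝ}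
    (ht : t ≠ 0) (m : ℕ) (δ : ℝ) :
    t ^ (m + 1) * ∫ R in 0..δ, R ^ m * F R (t * R) = ∫ x in 0..t * δ, x ^ m * F (x / t) x := by
  have h := smul_integral_comp_mul_left (f := fun x => x ^ m * F (x / t) x) (a := 0) (b := δ) t
  rw [mul_zero, smul_eq_mul] at h
  rw [← h, pow_succ', mul_assoc, ← integral_const_mul]
  congr 1
  refine integral_congr fun R _ => ?_
  simp only [mul_div_cancel_left₀ R ht, mul_pow, mul_assoc]

theorem integrableOn_pow_mul_exp_neg_mul_pow (m : ℕ) {n : ℕ} {b : ℝ} (hn : 0 < n) (hb : 0 < b) :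
    IntegrableOn (fun x : ℝ => x ^ m * Real.exp (-(b * x ^ n))) (Ioi 0) := by
  simpa [Real.rpow_natCast, neg_mul] using integrableOn_rpow_mul_exp_neg_mul_rpow
    (s := m) (p := n) (by linarith [m.cast_nonneg (α := ℝ)]) (by exact_mod_cast hn) hb

theorem integral_pow_mul_exp_neg_mul_pow (m : ℕ) {n : ℕ} {b : ℝ} (hn : 0 < n) (hb : 0 < b) :
    ∫ x in Ioi (0 : ℝ), x ^ m * Real.exp (-(b * x ^ n)) =
      b ^ (-((m + 1 : ℝ) / n)) * (1 / n) * Real.Gamma ((m + 1) / n) := by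
  have h := integral_rpow_mul_exp_neg_mul_rpow
    (q := m) (p := n) (by exact_mod_cast hn) (by linarith [m.cast_nonneg (α := ℝ)]) hb
  simp only [Real.rpow_natCast, neg_mul] at h
  rw [h, neg_div]

theorem tendsto_integral_comp_div_of_dominated {Φ : ℝ → ℝ → ℝ} {B : ℝ → ℝ} {δ : ℝ}
    (hδ : 0 < δ) (hΦ : ContinuousOn (Function.uncurry Φ) (Icc 0 δ ×ˢ Ioi 0))
    (hB : IntegrableOn B (Ioi 0)) (hΦB : ∀ R ∈ Icc 0 δ, ∀ x ∈ Ioi (0 : ℝ), ‖Φ R x‖ ≤ B x) :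
    Tendsto (fun t => ∫ x in 0..t * δ, Φ (x / t) x) atTop (𝓝 (∫ x in Ioi 0, Φ 0 x)) := by
  set F : ℝ → ℝ → ℝ := fun t => (Ioc 0 (t * δ)).indicator fun x => Φ (x / t) x
  have hmaps : ∀ t > 0, MapsTo (fun x => (x / t, x)) (Ioc 0 (t * δ)) (Icc 0 δ ×ˢ Ioi 0) :=
    fun t ht x hx => ⟨⟨div_nonneg hx.1.le ht.le, (div_le_iff₀ ht).2 (by linarith [hx.2])⟩, hx.1⟩
  have hF : ∀ t > 0, ∫ x in 0..t * δ, Φ (x / t) x = ∫ x in Ioi 0, F t x := by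
    intro t ht
    rw [intervalIntegral.integral_of_le (by positivity), integral_indicator measurableSet_Ioc,
      Measure.restrict_restrict measurableSet_Ioc, inter_eq_left.2 Ioc_subset_Ioi_self]
  have hmeas : ∀ᶠ t in atTop, AEStronglyMeasurable (F t) (volume.restrict (Ioi 0)) := by
    filter_upwards [eventually_gt_atTop 0] with t ht
    refine (aestronglyMeasurable_indicator_iff measurableSet_Ioc).2 ?_
    rw [Measure.restrict_restrict measurableSet_Ioc, inter_eq_left.2 Ioc_subset_Ioi_self]
    exact (hΦ.comp (by fun_prop) (hmaps t ht)).aestronglyMeasurable measurableSet_Ioc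
  have hbound : ∀ᶠ t in atTop, ∀ᵐ x ∂volume.restrict (Ioi 0), ‖F t x‖ ≤ B x := by
    filter_upwards [eventually_gt_atTop 0] with t ht
    filter_upwards [ae_restrict_mem measurableSet_Ioi] with x hx
    by_cases hmem : x ∈ Ioc 0 (t * δ)
    · simpa [F, indicator_of_mem hmem] using hΦB _ (hmaps t ht hmem).1 x hx
    · simpa [F, indicator_of_notMem hmem] using (norm_nonneg _).trans (hΦB 0 ⟨le_rfl, hδ.le⟩ x hx)
  have hlim : ∀ᵐ x ∂volume.restrict (Ioi 0), Tendsto (fun t => F t x) atTop (𝓝 (Φ 0 x)) := by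
    filter_upwards [ae_restrict_mem measurableSet_Ioi] with x hx
    have hmem : ∀ᶠ t in atTop, x ∈ Ioc 0 (t * δ) := by
      filter_upwards [eventually_ge_atTop (x / δ)] with t ht
      exact ⟨hx, (div_le_iff₀ hδ).1 ht⟩
    have hpair : Tendsto (fun t => (x / t, x)) atTop (𝓝[Icc 0 δ ×ˢ Ioi 0] (0, x)) := by
      refine tendsto_nhdsWithin_iff.2 ⟨?_, ?_⟩
      · exact (tendsto_const_nhds.div_atTop tendsto_id).prodMk_nhds tendsto_const_nhds
      · filter_upwards [hmem] with t ht
        exact hmaps t (by nlinarith [ht.1, ht.2]) ht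
    refine ((hΦ (0, x) ⟨⟨le_rfl, hδ.le⟩, hx⟩).tendsto.comp hpair).congr' ?_
    filter_upwards [hmem] with t ht
    simp [F, indicator_of_mem ht]
  refine (tendsto_integral_filter_of_dominated_convergence B hmeas hbound hB hlim).congr' ?_
  filter_upwards [eventually_gt_atTop 0] with t ht
  exact (hF t ht).symm

theorem tendsto_integral_pow_mul_exp_comp_div {g η : ℝ → ℝ} {δ c ε : ℝ} {m n : ℕ}
    (hδ : 0 < δ) (hc : 0 < c) (hn : 0 < n) (hg : ContinuousOn g (Icc 0 δ))
    (hη : ContinuousOn η (Icc 0 δ)) (hη0 : η 0 = 0) (hε : 0 < ε)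
    (hεη : ∀ R ∈ Icc 0 δ, ε ≤ 1 + η R) :
    Tendsto
      (fun t => ∫ x in 0..t * δ, x ^ m * (g (x / t) * Real.exp (-(c * x ^ n * (1 + η (x / t))))))
      atTop (𝓝 (g 0 * c ^ (-((m + 1 : ℝ) / n)) * (1 / n) * Real.Gamma ((m + 1) / n))) := by
  obtain ⟨M, hM⟩ := isCompact_Icc.exists_bound_of_continuousOn hg
  set Φ : ℝ → ℝ → ℝ := fun R x => x ^ m * (g R * Real.exp (-(c * x ^ n * (1 + η R))))
  have hΦ : ContinuousOn (Function.uncurry Φ) (Icc 0 δ ×ˢ Ioi 0) := by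
    have hfst : MapsTo Prod.fst (Icc 0 δ ×ˢ Ioi (0 : ℝ)) (Icc 0 δ) := fun _ hp => hp.1
    exact (continuous_snd.pow m).continuousOn.mul ((hg.comp continuousOn_fst hfst).mul
      (((continuous_const.mul (continuous_snd.pow n)).continuousOn.mul
        (continuousOn_const.add (hη.comp continuousOn_fst hfst))).neg.rexp))
  have hΦB : ∀ R ∈ Icc 0 δ, ∀ x ∈ Ioi (0 : ℝ),
      ‖Φ R x‖ ≤ M * (x ^ m * Real.exp (-(c * ε * x ^ n))) := by
    intro R hR x hx
    have hexp : Real.exp (-(c * x ^ n * (1 + η R))) ≤ Real.exp (-(c * ε * x ^ n)) := by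
      have := mul_le_mul_of_nonneg_left (hεη R hR) (mul_pos hc (pow_pos (mem_Ioi.1 hx) n)).le
      rw [Real.exp_le_exp, neg_le_neg_iff]
      linarith
    rw [norm_mul, norm_mul, Real.norm_of_nonneg (pow_nonneg (le_of_lt hx) m),
      Real.norm_of_nonneg (Real.exp_pos _).le]
    calc x ^ m * (‖g R‖ * Real.exp (-(c * x ^ n * (1 + η R))))
        ≤ x ^ m * (M * Real.exp (-(c * ε * x ^ n))) :=
          mul_le_mul_of_nonneg_left (mul_le_mul (hM R hR) hexp (Real.exp_pos _).le
            ((norm_nonneg _).trans (hM R hR)))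
            (pow_nonneg (le_of_lt hx) m)
      _ = M * (x ^ m * Real.exp (-(c * ε * x ^ n))) := by ring
  have hlim := tendsto_integral_comp_div_of_dominated hδ hΦ
    ((integrableOn_pow_mul_exp_neg_mul_pow m hn (mul_pos hc hε)).const_mul M) hΦB
  have hΦ0 : ∫ x in Ioi 0, Φ 0 x = g 0 * ∫ x in Ioi 0, x ^ m * Real.exp (-(c * x ^ n)) := by
    rw [← integral_const_mul]
    congr 1 with x
    simp only [Φ, hη0, add_zero, mul_one]
    ring
  rwa [hΦ0, integral_pow_mul_exp_neg_mul_pow m hn hc, ← mul_assoc, ← mul_assoc] at hlim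

theorem stmt_4_general (g η E : ℝ → ℝ) (δ c : ℝ) (d n : ℕ)
    (hδ : 0 < δ) (hc : 0 < c) (hd : 1 ≤ d) (hn : 2 ≤ n)
    (hg : ContinuousOn g (Set.Icc 0 δ))
    (hη : ContinuousOn η (Set.Icc 0 δ)) (hη0 : η 0 = 0)
    (hE : ∀ R ∈ Set.Icc (0:ℝ) δ, E R = c * R ^ n * (1 + η R))
    (hEpos : ∀ R ∈ Set.Ioc (0:ℝ) δ, 0 < E R) :
    Tendsto (fun T : ℝ =>
        T ^ ((d : ℝ) / (n : ℝ)) * ∫ R in (0:ℝ)..δ, R ^ (d - 1) * g R * Real.exp (-T * E R))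
      atTop
      (𝓝 (g 0 * c ^ (-((d : ℝ) / (n : ℝ))) * (1 / (n : ℝ)) *
        Real.Gamma ((d : ℝ) / (n : ℝ)))) := by
  have hn0 : 0 < n := by omega
  have hpos : ∀ R ∈ Icc 0 δ, 0 < 1 + η R := by
    intro R hR
    rcases hR.1.eq_or_lt with rfl | hR0
    · simp [hη0]
    · have hER := hEpos R ⟨hR0, hR.2⟩
      rw [hE R hR] at hER
      exact pos_of_mul_pos_right hER (by positivity)
  obtain ⟨ε, hε, hεη⟩ := isCompact_Icc.exists_forall_le' (continuousOn_const.add hη) hpos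
  have hlim := (tendsto_integral_pow_mul_exp_comp_div (m := d - 1) hδ hc hn0 hg hη hη0 hε
    hεη).comp (tendsto_rpow_atTop (by positivity : 0 < 1 / (n : ℝ)))
  rw [Nat.cast_sub hd, Nat.cast_one, sub_add_cancel] at hlim
  refine hlim.congr' ?_
  filter_upwards [eventually_gt_atTop 0] with T hT
  have htn : (T ^ (1 / (n : ℝ))) ^ n = T := by
    rw [← Real.rpow_natCast, ← Real.rpow_mul hT.le, one_div_mul_cancel (by positivity),
      Real.rpow_one]
  have htd : T ^ ((d : ℝ) / n) = (T ^ (1 / (n : ℝ))) ^ (d - 1 + 1) := by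
    rw [Nat.sub_add_cancel hd, ← Real.rpow_natCast, ← Real.rpow_mul hT.le, one_div_mul_eq_div]
  rw [Function.comp_apply, htd, ← intervalIntegral.pow_succ_mul_integral_pow_mul_comp_mul
    (fun R x => g R * Real.exp (-(c * x ^ n * (1 + η R)))) (by positivity) (d - 1) δ]
  refine congrArg _ (intervalIntegral.integral_congr fun R hR => ?_)
  rw [uIcc_of_le hδ.le] at hR
  rw [hE R hR, mul_pow, htn]
  ring_nf

theorem stmt_4 (g η E : ℝ → ℝ) (δ c : ℝ) (d n : ℕ)
    (hδ : 0 < δ) (hc : 0 < c) (hd : 1 ≤ d) (hn : 2 ≤ n)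
    (hg : ContinuousOn g (Set.Icc 0 δ)) (hg0 : 0 < g 0)
    (hη : ContinuousOn η (Set.Icc 0 δ)) (hη0 : η 0 = 0)
    (hE : ∀ R ∈ Set.Icc (0:ℝ) δ, E R = c * R ^ n * (1 + η R))
    (hEpos : ∀ R ∈ Set.Ioc (0:ℝ) δ, 0 < E R) :
    Tendsto (fun T : ℝ =>
        T ^ ((d : ℝ) / (n : ℝ)) * ∫ R in (0:ℝ)..δ, R ^ (d - 1) * g R * Real.exp (-T * E R))
      atTop
      (𝓝 (g 0 * c ^ (-((d : ℝ) / (n : ℝ))) * (1 / (n : ℝ)) *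
        Real.Gamma ((d : ℝ) / (n : ℝ)))) :=
  stmt_4_general g η E δ c d n hδ hc hd hn hg hη hη0 hE hEpos
end

section
/- Suppose σ > 0, L ≥ 1, and for ℓ = 1,…,L let fℓ > 0 and mℓ⁻¹ ≥ 0 be constants. Let μ be the rotation-invariant probability measure on the unit sphere S^{d−1} ⊂ ℝ^d with d ≥ 2, and fix a unit vector k̂. If for all x ≥ 0, ∑ℓ fℓ = ∑ℓ fℓ ∫_{S^{d−1}} exp(x²(1 − (mℓ⁻¹/σ²)(P̂·k̂)²)) dμ(P̂), then a contradiction follows; i.e., no such constants exist. Equivalently: for d ≥ 2 the identity ∑ℓ fℓ = ∑ℓ fℓ ∫ e^{x²(1 − aℓ (P̂·k̂)²)} dμ(P̂) with aℓ = mℓ⁻¹/σ² ≥ 0 cannot hold for all x ≥ 0, since the set {P̂ : 1 − aℓ(P̂·k̂)² > 0} has positive measure, making the right side tend to ∞ as x → ∞. -/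
/-!
Choose `v ⊥ k̂` on the sphere, which is possible because `d ≥ 2`. Near `v` the exponent
`x² (1 - a (P̂ · k̂)²)` exceeds `x² / 2`, and this neighbourhood has positive `μ`-measure:
rotations act transitively on the sphere, so finitely many rotated copies of it cover the
compact sphere. Hence one term of the right-hand side grows like `exp (x² / 2)` while the
left-hand side is constant.
-/

open MeasureTheory Filter Topology

/-- A linear isometric equivalence of Euclidean space maps the unit sphere to itself. -/
noncomputable def sphereMap {d : ℕ}
    (R : EuclideanSpace ℝ (Fin d) ≃ₗᵢ[ℝ] EuclideanSpace ℝ (Fin d))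
    (x : Metric.sphere (0 : EuclideanSpace ℝ (Fin d)) 1) :
    Metric.sphere (0 : EuclideanSpace ℝ (Fin d)) 1 :=
  ⟨R x, by
    have hx : ‖(x : EuclideanSpace ℝ (Fin d))‖ = 1 :=
      mem_sphere_zero_iff_norm.mp x.2
    exact mem_sphere_zero_iff_norm.mpr (by rw [R.norm_map]; exact hx)⟩

theorem MeasureTheory.measure_isOpen_pos_of_map_eq_of_transitive {X ι : Type*}
    [TopologicalSpace X] [CompactSpace X] [MeasurableSpace X] [BorelSpace X]
    {μ : Measure X} [NeZero μ] {T : ι → X → X} (hT : ∀ i, Continuous (T i))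
    (hμT : ∀ i, μ.map (T i) = μ) (htrans : ∀ p q, ∃ i, T i p = q)
    {U : Set X} (hU : IsOpen U) (hne : U.Nonempty) : 0 < μ U := by
  obtain ⟨u, hu⟩ := hne
  choose i hi using fun p => htrans p u
  obtain ⟨t, ht⟩ := isCompact_univ.elim_finite_subcover (fun p => T (i p) ⁻¹' U)
    (fun p => hU.preimage (hT _)) fun p _ => Set.mem_iUnion.2 ⟨p, by simp [hi, hu]⟩
  refine pos_iff_ne_zero.2 fun hμU => NeZero.ne μ ?_
  rw [← Measure.measure_univ_eq_zero]
  refine measure_mono_null ht ((measure_biUnion_null_iff t.countable_toSet).2 fun p _ => ?_)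
  rwa [← Measure.map_apply (hT _).measurable hU.measurableSet, hμT]

theorem exists_norm_eq_one_inner_eq_zero {E : Type*} [NormedAddCommGroup E]
    [InnerProductSpace ℝ E] [FiniteDimensional ℝ E] (hE : 2 ≤ Module.finrank ℝ E) (k : E) :
    ∃ v : E, ‖v‖ = 1 ∧ inner ℝ k v = 0 := by
  have hk : Module.finrank ℝ (ℝ ∙ k) ≤ 1 := by
    simpa using finrank_span_le_card (R := ℝ) ({k} : Set E)
  have hperp := (ℝ ∙ k).finrank_add_finrank_orthogonal
  obtain ⟨w, hw, hw0⟩ := Submodule.exists_mem_ne_zero_of_ne_bot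
    (Submodule.one_le_finrank_iff.1 (by omega) : (ℝ ∙ k)ᗮ ≠ ⊥)
  exact ⟨(‖w‖⁻¹ : ℝ) • w, norm_smul_inv_norm hw0,
    Submodule.mem_orthogonal_singleton_iff_inner_right.1 ((ℝ ∙ k)ᗮ.smul_mem _ hw)⟩

theorem tendsto_integral_exp_mul_atTop {X : Type*} [TopologicalSpace X] [CompactSpace X]
    [MeasurableSpace X] [OpensMeasurableSpace X] {μ : Measure X} [IsFiniteMeasure μ]
    {h : X → ℝ} (hh : Continuous h) {c : ℝ} (hc : 0 < c) (hμ : 0 < μ {x | c < h x}) :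
    Tendsto (fun t => ∫ x, Real.exp (t * h x) ∂μ) atTop atTop := by
  set U := {x | c < h x}
  have hU : MeasurableSet U := (isOpen_lt continuous_const hh).measurableSet
  have hU_pos : 0 < μ.real U := ENNReal.toReal_pos hμ.ne' (measure_ne_top μ U)
  have hlower : ∀ t, 0 ≤ t →
      Real.exp (t * c) * μ.real U ≤ ∫ x, Real.exp (t * h x) ∂μ := by
    intro t ht
    have hint : Integrable (fun x => Real.exp (t * h x)) μ :=
      (Real.continuous_exp.comp (continuous_const.mul hh)).integrable_of_hasCompactSupport
        (HasCompactSupport.of_compactSpace _)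
    calc Real.exp (t * c) * μ.real U ≤ ∫ x in U, Real.exp (t * h x) ∂μ :=
          setIntegral_ge_of_const_le_real hU (measure_ne_top μ U)
            (fun x hx => Real.exp_le_exp.2 (mul_le_mul_of_nonneg_left (le_of_lt hx) ht))
            hint.integrableOn
      _ ≤ ∫ x, Real.exp (t * h x) ∂μ :=
          setIntegral_le_integral hint (Eventually.of_forall fun _ => (Real.exp_pos _).le)
  refine tendsto_atTop_mono' _ ((eventually_ge_atTop 0).mono hlower) ?_
  exact (Real.tendsto_exp_atTop.comp (tendsto_id.atTop_mul_const hc)).atTop_mul_const hU_pos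

theorem Filter.Tendsto.finset_sum_atTop_of_nonneg {ι α β : Type*} [AddCommMonoid β]
    [PartialOrder β] [IsOrderedAddMonoid β] {l : Filter α} {s : Finset ι} {F : ι → α → β}
    (hF : ∀ j ∈ s, ∀ x, 0 ≤ F j x) {i : ι} (hi : i ∈ s) (hFi : Tendsto (F i) l atTop) :
    Tendsto (fun x => ∑ j ∈ s, F j x) l atTop :=
  tendsto_atTop_mono (fun x => Finset.single_le_sum (fun j hj => hF j hj x) hi) hFi

theorem continuous_sphereMap {d : ℕ}
    (R : EuclideanSpace ℝ (Fin d) ≃ₗᵢ[ℝ] EuclideanSpace ℝ (Fin d)) :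
    Continuous (sphereMap R) :=
  (R.continuous.comp continuous_subtype_val).subtype_mk _

-- The reflection in the hyperplane bisecting `p` and `q` swaps them.
theorem exists_sphereMap_eq {d : ℕ} (p q : Metric.sphere (0 : EuclideanSpace ℝ (Fin d)) 1) :
    ∃ R, sphereMap R p = q :=
  ⟨Submodule.reflection (ℝ ∙ ((p : EuclideanSpace ℝ (Fin d)) - q))ᗮ, Subtype.ext <|
    Submodule.reflection_sub <| by
      rw [mem_sphere_zero_iff_norm.1 p.2, mem_sphere_zero_iff_norm.1 q.2]⟩

theorem stmt_5_general {d L : ℕ} (hd : 2 ≤ d) (hL : 1 ≤ L)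
    (σ : ℝ)
    (f minv : Fin L → ℝ) (hf : ∀ ℓ, 0 < f ℓ)
    (μ : Measure (Metric.sphere (0 : EuclideanSpace ℝ (Fin d)) 1))
    [IsProbabilityMeasure μ]
    (hinv : ∀ R : EuclideanSpace ℝ (Fin d) ≃ₗᵢ[ℝ] EuclideanSpace ℝ (Fin d),
      Measure.map (sphereMap R) μ = μ)
    (khat : EuclideanSpace ℝ (Fin d)) :
    ¬ (∀ x : ℝ, 0 ≤ x →
        (∑ ℓ, f ℓ) =
          ∑ ℓ, f ℓ * ∫ Phat, Real.exp (x ^ 2 *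
            (1 - (minv ℓ / σ ^ 2) *
              (inner ℝ ((Phat : Metric.sphere (0 : EuclideanSpace ℝ (Fin d)) 1) :
                EuclideanSpace ℝ (Fin d)) khat : ℝ) ^ 2)) ∂μ) := by
  intro h
  let ℓ₀ : Fin L := ⟨0, hL⟩
  have hcont : Continuous fun P : Metric.sphere (0 : EuclideanSpace ℝ (Fin d)) 1 =>
      1 - minv ℓ₀ / σ ^ 2 * inner ℝ (P : EuclideanSpace ℝ (Fin d)) khat ^ 2 := by
    fun_prop
  obtain ⟨v, hv, hkv⟩ := exists_norm_eq_one_inner_eq_zero (by simpa using hd) khat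
  have hpos : 0 < μ {P | 1 / 2 < 1 - minv ℓ₀ / σ ^ 2 *
      inner ℝ (P : EuclideanSpace ℝ (Fin d)) khat ^ 2} :=
    measure_isOpen_pos_of_map_eq_of_transitive continuous_sphereMap hinv exists_sphereMap_eq
      (isOpen_lt continuous_const hcont)
      ⟨⟨v, mem_sphere_zero_iff_norm.2 hv⟩, by norm_num [real_inner_comm, hkv]⟩
  have hconst := (tendsto_const_nhds (x := ∑ ℓ, f ℓ)).congr' ((eventually_ge_atTop 0).mono h)
  refine not_tendsto_nhds_of_tendsto_atTop ?_ _ hconst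
  refine Tendsto.finset_sum_atTop_of_nonneg
    (fun ℓ _ x => mul_nonneg (hf ℓ).le (integral_nonneg fun _ => (Real.exp_pos _).le))
    (Finset.mem_univ ℓ₀) ?_
  exact ((tendsto_integral_exp_mul_atTop hcont one_half_pos hpos).comp
    (tendsto_pow_atTop two_ne_zero)).const_mul_atTop (hf ℓ₀)

theorem stmt_5 {d L : ℕ} (hd : 2 ≤ d) (hL : 1 ≤ L)
    (σ : ℝ) (hσ : 0 < σ)
    (f minv : Fin L → ℝ) (hf : ∀ ℓ, 0 < f ℓ) (hm : ∀ ℓ, 0 ≤ minv ℓ)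
    (μ : Measure (Metric.sphere (0 : EuclideanSpace ℝ (Fin d)) 1))
    [IsProbabilityMeasure μ]
    (hinv : ∀ R : EuclideanSpace ℝ (Fin d) ≃ₗᵢ[ℝ] EuclideanSpace ℝ (Fin d),
      Measure.map (sphereMap R) μ = μ)
    (khat : EuclideanSpace ℝ (Fin d)) (hk : ‖khat‖ = 1) :
    ¬ (∀ x : ℝ, 0 ≤ x →
        (∑ ℓ, f ℓ) =
          ∑ ℓ, f ℓ * ∫ Phat, Real.exp (x ^ 2 *
            (1 - (minv ℓ / σ ^ 2) *
              (inner ℝ ((Phat : Metric.sphere (0 : EuclideanSpace ℝ (Fin d)) 1) :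
                EuclideanSpace ℝ (Fin d)) khat : ℝ) ^ 2)) ∂μ) :=
  stmt_5_general hd hL σ f minv hf μ hinv khat
end
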